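/- arXiv:2004.06776 — 6 statements merged into one kernel-verified Lean document; each statement's English description precedes it below -/
import Mathlib

section
/- Let a > b > 0, c² = a² − b², δ = √(a⁴ − a²b² + b⁴). If a/b > √(2√2 − 1), then x⊥ = a²√(a⁴ + 3b⁴ − 4b²δ)/c³ is the unique positive root in the interval (0, a) of the quartic c⁸x⁴ − 2a⁴c²(a⁴ + 3b⁴)x² + a⁸(a⁴ + 2a²b² − 7b⁴) = 0. -/
/-!
Put `δ₋ = a⁴ + 3b⁴ - 4b²δ` and `δ₊ = a⁴ + 3b⁴ + 4b²δ`. Since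
`(a⁴ + 3b⁴)² - (a² - b²)²(a⁴ + 2a²b² - 7b⁴) = 16b⁴δ²`, the quartic, read as a quadratic in `x²`,
has the roots `c⁶x² = a⁴δ₋` and `c⁶x² = a⁴δ₊`. The ratio condition makes the constant term
`a⁴ + 2a²b² - 7b⁴ = (a² + b²)² - 8b⁴` positive, hence `δ₋ > 0`, and `x⊥` is the positive square
root of the smaller root. It lies below `a` because `4a²δ > 3a⁴ + b⁴`, while the larger root
exceeds `a²`, so it has no square root in `(0, a)`.
-/

open Real

section

variable {a b c δ : ℝ}

theorem pow_four_add_mul_sub_pos_of_sqrt_lt_div (hb : 0 < b)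
    (h : √(2 * √2 - 1) < a / b) : 0 < a^4 + 2*a^2*b^2 - 7*b^4 := by
  have hsq : 2 * √2 - 1 < (a / b)^2 := (sqrt_lt' ((sqrt_nonneg _).trans_lt h)).mp h
  rw [div_pow, lt_div_iff₀ (by positivity)] at hsq
  have hlt : 2 * √2 * b^2 < a^2 + b^2 := by linarith
  have hsq' : (2 * √2 * b^2)^2 < (a^2 + b^2)^2 :=
    pow_lt_pow_left₀ hlt (by positivity) two_ne_zero
  have h2 : √2 ^ 2 = 2 := sq_sqrt zero_le_two
  nlinarith

theorem pow_four_add_sq_sub_eq :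
    (a^4 + 3*b^4)^2 - (a^2 - b^2)^2 * (a^4 + 2*a^2*b^2 - 7*b^4)
      = 16*b^4*(a^4 - a^2*b^2 + b^4) := by
  ring

theorem mul_sqrt_lt_pow_four_add (hb : 0 < b) (hδ2 : δ^2 = a^4 - a^2*b^2 + b^4)
    (hP : 0 < a^4 + 2*a^2*b^2 - 7*b^4) : 4*b^2*δ < a^4 + 3*b^4 := by
  have hc : 0 < (a^2 - b^2)^2 := pow_two_pos_of_ne_zero fun h => by nlinarith
  refine lt_of_pow_lt_pow_left₀ 2 (by positivity) ?_
  nlinarith [pow_four_add_sq_sub_eq (a := a) (b := b), mul_pos hc hP]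

theorem pow_four_add_lt_mul_sqrt (hb : 0 < b) (hab : b < a) (hδ : 0 ≤ δ)
    (hδ2 : δ^2 = a^4 - a^2*b^2 + b^4) : 3*a^4 + b^4 < 4*a^2*δ := by
  have hd : 0 < a^2 - b^2 := by nlinarith
  have h7 : 0 < 7*a^4 - 2*a^2*b^2 - b^4 := by
    nlinarith [mul_pos (mul_pos hb hb) hd, pow_pos (hb.trans hab) 4]
  have hc : 0 < (a^2 - b^2)^2 := pow_pos hd 2
  have key : (4*a^2*δ)^2 - (3*a^4 + b^4)^2 = (a^2 - b^2)^2 * (7*a^4 - 2*a^2*b^2 - b^4) := by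
    rw [mul_pow, hδ2]; ring
  refine lt_of_pow_lt_pow_left₀ 2 (by positivity) ?_
  nlinarith [mul_pos hc h7]

theorem sq_mul_sub_sqrt_lt_pow_three (hb : 0 < b) (hab : b < a) (hδ : 0 ≤ δ)
    (hδ2 : δ^2 = a^4 - a^2*b^2 + b^4) :
    a^2 * (a^4 + 3*b^4 - 4*b^2*δ) < (a^2 - b^2)^3 := by
  have h := mul_lt_mul_of_pos_left (pow_four_add_lt_mul_sqrt hb hab hδ hδ2)
    (by positivity : 0 < b^2)
  nlinarith

theorem pow_six_mul_sq_lt_of_lt (hb : 0 < b) (hab : b < a) (hδ : 0 ≤ δ)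
    (hc2 : c^2 = a^2 - b^2) {x : ℝ} (hx : 0 < x) (hxa : x < a) :
    c^6 * x^2 < a^4 * (a^4 + 3*b^4 + 4*b^2*δ) := by
  have hc6 : c^6 = (a^2 - b^2)^3 := by rw [← hc2]; ring
  have hd : 0 < a^2 - b^2 := by nlinarith
  have hx2 : x^2 < a^2 := pow_lt_pow_left₀ hxa hx.le two_ne_zero
  calc c^6 * x^2 < (a^2 - b^2)^3 * a^2 := by rw [hc6]; gcongr
    _ ≤ (a^2)^3 * a^2 := by gcongr; nlinarith
    _ ≤ a^4 * (a^4 + 3*b^4 + 4*b^2*δ) := by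
      have : 0 ≤ a^4 * (3*b^4 + 4*b^2*δ) := by positivity
      nlinarith

theorem pow_four_mul_quartic_eq (hc2 : c^2 = a^2 - b^2) (hδ2 : δ^2 = a^4 - a^2*b^2 + b^4)
    (x : ℝ) :
    c^4 * (c^8 * x^4 - 2*a^4*c^2*(a^4 + 3*b^4) * x^2 + a^8*(a^4 + 2*a^2*b^2 - 7*b^4))
      = (c^6*x^2 - a^4*(a^4 + 3*b^4 - 4*b^2*δ)) * (c^6*x^2 - a^4*(a^4 + 3*b^4 + 4*b^2*δ)) := by
  linear_combination 16*a^8*b^4 * hδ2 + a^8*(a^4 + 2*a^2*b^2 - 7*b^4)*(c^2 + a^2 - b^2) * hc2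

theorem lt_of_pow_six_mul_sq_eq (hb : 0 < b) (hab : b < a) (hδ : 0 ≤ δ)
    (hδ2 : δ^2 = a^4 - a^2*b^2 + b^4) (hc2 : c^2 = a^2 - b^2) (hc : c ≠ 0) {y : ℝ}
    (h : c^6 * y^2 = a^4 * (a^4 + 3*b^4 - 4*b^2*δ)) : y < a := by
  have ha : 0 < a := hb.trans hab
  have hlt : c^6 * y^2 < c^6 * a^2 := by
    have hc6 : c^6 * a^2 = a^2 * (a^2 - b^2)^3 := by rw [← hc2]; ring
    rw [h, hc6, show ∀ t : ℝ, a^4 * t = a^2 * (a^2 * t) by intro t; ring]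
    exact mul_lt_mul_of_pos_left (sq_mul_sub_sqrt_lt_pow_three hb hab hδ hδ2) (by positivity)
  have hc6 : 0 < c^6 := by positivity
  exact lt_of_pow_lt_pow_left₀ 2 ha.le (lt_of_mul_lt_mul_left hlt hc6.le)

theorem pow_six_mul_sq_eq_of_quartic_eq_zero (hc2 : c^2 = a^2 - b^2)
    (hδ2 : δ^2 = a^4 - a^2*b^2 + b^4) {x : ℝ}
    (hQ : c^8 * x^4 - 2*a^4*c^2*(a^4 + 3*b^4) * x^2 + a^8*(a^4 + 2*a^2*b^2 - 7*b^4) = 0) :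
    c^6*x^2 = a^4*(a^4 + 3*b^4 - 4*b^2*δ) ∨ c^6*x^2 = a^4*(a^4 + 3*b^4 + 4*b^2*δ) := by
  have h := pow_four_mul_quartic_eq hc2 hδ2 x
  rw [hQ, mul_zero, eq_comm, mul_eq_zero] at h
  exact h.imp sub_eq_zero.mp sub_eq_zero.mp

end

theorem stmt_1 (a b c δ : ℝ) (hab : a > b) (hb : b > 0)
    (hc : c > 0) (hc2 : c^2 = a^2 - b^2)
    (hδ : δ = Real.sqrt (a^4 - a^2*b^2 + b^4))
    (hratio : a / b > Real.sqrt (2 * Real.sqrt 2 - 1))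
    (xperp : ℝ) (hx : xperp = a^2 * Real.sqrt (a^4 + 3*b^4 - 4*b^2*δ) / c^3) :
    (0 < xperp ∧ xperp < a ∧
      c^8 * xperp^4 - 2*a^4*c^2*(a^4 + 3*b^4) * xperp^2
        + a^8*(a^4 + 2*a^2*b^2 - 7*b^4) = 0) ∧
    ∀ x : ℝ, 0 < x → x < a →
      c^8 * x^4 - 2*a^4*c^2*(a^4 + 3*b^4) * x^2
        + a^8*(a^4 + 2*a^2*b^2 - 7*b^4) = 0 → x = xperp := by
  have hδ0 : 0 ≤ δ := hδ ▸ sqrt_nonneg _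
  have hδ2 : δ^2 = a^4 - a^2*b^2 + b^4 := by
    rw [hδ, sq_sqrt]; nlinarith [sq_nonneg (a^2 - b^2)]
  have hE : 0 < a^4 + 3*b^4 - 4*b^2*δ := sub_pos.mpr <|
    mul_sqrt_lt_pow_four_add hb hδ2 (pow_four_add_mul_sub_pos_of_sqrt_lt_div hb hratio)
  have hxperp : 0 < xperp := by
    have ha : 0 < a := hb.trans hab
    rw [hx]; exact div_pos (mul_pos (by positivity) (sqrt_pos.mpr hE)) (by positivity)
  have hxperp_sq : c^6 * xperp^2 = a^4 * (a^4 + 3*b^4 - 4*b^2*δ) := by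
    rw [hx, div_pow, mul_pow, sq_sqrt hE.le]; field_simp
  refine ⟨⟨hxperp, lt_of_pow_six_mul_sq_eq hb hab hδ0 hδ2 hc2 hc.ne' hxperp_sq, ?_⟩,
    fun x hx0 hxa hQ => ?_⟩
  · have h := pow_four_mul_quartic_eq hc2 hδ2 xperp
    rw [hxperp_sq, sub_self, zero_mul] at h
    exact (mul_eq_zero.mp h).resolve_left (by positivity)
  · rcases pow_six_mul_sq_eq_of_quartic_eq_zero hc2 hδ2 hQ with h | h
    · rw [← hxperp_sq] at h
      exact (pow_left_inj₀ hx0.le hxperp.le two_ne_zero).mp (mul_left_cancel₀ (by positivity) h)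
    · exact absurd h (pow_six_mul_sq_lt_of_lt hb hab hδ0 hc2 hx0 hxa).ne
end

section
/- Let α > 1, δ = √(α⁴ − α² + 1), s = (α²/(α² − 1))·√(2δ − α² − 1), h = (α² + δ + 1)/(α² + δ). Then h/s = √3/3 if and only if α = √(4√3 − 3). -/
set_option maxHeartbeats 1000000 in
theorem stmt_7 (α δ s h : ℝ) (hα : α > 1)
    (hδ : δ = Real.sqrt (α^4 - α^2 + 1))
    (hs : s = α^2 / (α^2 - 1) * Real.sqrt (2*δ - α^2 - 1))
    (hh : h = (α^2 + δ + 1) / (α^2 + δ)) :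
    h / s = Real.sqrt 3 / 3 ↔ α = Real.sqrt (4 * Real.sqrt 3 - 3) := by
  have hs3 : Real.sqrt 3 ^ 2 = 3 := Real.sq_sqrt (by norm_num)
  have hs3pos : (1:ℝ) < Real.sqrt 3 := by
    nlinarith [Real.sqrt_nonneg 3]
  have hs3lt : Real.sqrt 3 < 2 := by nlinarith [Real.sqrt_nonneg 3]
  have ha1 : α^2 > 1 := by nlinarith
  have hqpos : α^4 - α^2 + 1 > 0 := by nlinarith
  have hδpos : 0 < δ := by rw [hδ]; exact Real.sqrt_pos.mpr hqpos
  have hδ2 : δ^2 = α^4 - α^2 + 1 := by rw [hδ]; exact Real.sq_sqrt hqpos.le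
  have h2δ : 0 < 2*δ - α^2 - 1 := by nlinarith [sq_nonneg (α^2 - 1)]
  have ht2 : (Real.sqrt (2*δ - α^2 - 1))^2 = 2*δ - α^2 - 1 := Real.sq_sqrt h2δ.le
  have htpos : 0 < Real.sqrt (2*δ - α^2 - 1) := Real.sqrt_pos.mpr h2δ
  have ha1' : α^2 - 1 ≠ 0 := by linarith
  have hspos : 0 < s := by
    rw [hs]
    exact mul_pos (div_pos (by positivity) (by linarith)) htpos
  have hadpos : 0 < α^2 + δ := by positivity
  have hhpos : 0 < h := by
    rw [hh]; exact div_pos (by linarith) hadpos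
  have e1 : s * (α^2 - 1) = α^2 * Real.sqrt (2*δ - α^2 - 1) := by
    rw [hs]; field_simp
  have e2 : h * (α^2 + δ) = α^2 + δ + 1 := by
    rw [hh]; field_simp
  constructor
  · intro heq
    rw [div_eq_div_iff hspos.ne' (by norm_num : (3:ℝ) ≠ 0)] at heq
    have hsh : s = Real.sqrt 3 * h := by
      linear_combination (-(Real.sqrt 3)/3) * heq + (-(s/3)) * hs3
    have hkey : s^2 = 3*h^2 := by rw [hsh, mul_pow, hs3]
    have key : 3*(α^2+δ+1)^2*(α^2-1)^2 = α^4*(α^2+δ)^2*(2*δ-α^2-1) := by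
      linear_combination
        (-(3*(α^2-1)^2*(h*(α^2+δ)+(α^2+δ+1)))) * e2
        + (-((α^2-1)^2*(α^2+δ)^2)) * hkey
        + ((α^2+δ)^2*(s*(α^2-1)+α^2*Real.sqrt (2*δ - α^2 - 1))) * e1
        + (α^4*(α^2+δ)^2) * ht2
    have lin : (6 - 9*α^2 + 7*α^4 - 13*α^6 + 11*α^8 - 2*α^10)
        + (6 - 6*α^2 - 8*α^4 + 10*α^6 - 2*α^8) * δ = 0 := by
      linear_combination key - ((3 - 6*α^2 + 4*α^4 - 3*α^6) + (-2*α^4)*δ) * hδ2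
    have sq : (6 - 9*α^2 + 7*α^4 - 13*α^6 + 11*α^8 - 2*α^10)^2
        = (6 - 6*α^2 - 8*α^4 + 10*α^6 - 2*α^8)^2 * (α^4 - α^2 + 1) := by
      linear_combination ((6 - 9*α^2 + 7*α^4 - 13*α^6 + 11*α^8 - 2*α^10)
        - (6 - 6*α^2 - 8*α^4 + 10*α^6 - 2*α^8) * δ) * lin
        + (6 - 6*α^2 - 8*α^4 + 10*α^6 - 2*α^8)^2 * hδ2
    have hfac : (3*α^4*(α^2-1)^4) * (α^4 + 6*α^2 - 39) = 0 := by
      linear_combination -sq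
    have hfacpos : 0 < 3*α^4*(α^2-1)^4 := by
      have h1 : (0:ℝ) < α^2 - 1 := by linarith
      positivity
    have hpoly : α^4 + 6*α^2 - 39 = 0 :=
      (mul_eq_zero.mp hfac).resolve_left hfacpos.ne'
    have hz : (α^2 + 3 - 4*Real.sqrt 3) * (α^2 + 3 + 4*Real.sqrt 3) = 0 := by
      linear_combination hpoly - 16 * hs3
    have ha2 : α^2 = 4*Real.sqrt 3 - 3 := by
      rcases mul_eq_zero.mp hz with hcase | hcase
      · linarith
      · nlinarith
    calc α = Real.sqrt (α^2) := (Real.sqrt_sq (by positivity)).symm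
    _ = Real.sqrt (4 * Real.sqrt 3 - 3) := by rw [ha2]
  · intro hαeq
    have ha2 : α^2 = 4*Real.sqrt 3 - 3 := by
      rw [hαeq]; exact Real.sq_sqrt (by nlinarith)
    have hδval : δ = 7 - 2*Real.sqrt 3 := by
      have h1 : α^4 - α^2 + 1 = (7 - 2*Real.sqrt 3)^2 := by
        linear_combination (α^2 + 4*Real.sqrt 3 - 4) * ha2 + 12 * hs3
      rw [hδ, h1, Real.sqrt_sq (by nlinarith)]
    have h2 : 2*δ - α^2 - 1 = (2*Real.sqrt 3 - 2)^2 := by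
      rw [hδval, ha2]; linear_combination (-4) * hs3
    have hsval : s = α^2 / (α^2 - 1) * (2*Real.sqrt 3 - 2) := by
      rw [hs, h2, Real.sqrt_sq (by nlinarith)]
    have hsv : s = (4*Real.sqrt 3 - 3)/2 := by
      rw [hsval, ha2, div_mul_eq_mul_div,
        div_eq_div_iff (by nlinarith : (4*Real.sqrt 3 - 3 - 1 : ℝ) ≠ 0)
          (two_ne_zero)]
      ring
    have hhv : h = (2*Real.sqrt 3 + 5)/(2*Real.sqrt 3 + 4) := by
      rw [hh, ha2, hδval]; congr 1 <;> ring
    rw [hhv, hsv]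
    rw [div_eq_div_iff (ne_of_gt (by linarith : (0:ℝ) < (4*Real.sqrt 3 - 3)/2)) (by norm_num : (3:ℝ) ≠ 0)]
    have hne1 : (2*Real.sqrt 3 + 4 : ℝ) ≠ 0 := by positivity
    field_simp
    linear_combination (-8*Real.sqrt 3 - 10) * hs3
end

section
/- For a > b > 0, let c² = a² − b², δ = √(a⁴ − a²b² + b⁴), and ρ = 2(δ − b²)(a² − δ)/c⁴. Then 0 < ρ ≤ 1/2, with ρ = 1/2 attained in the limit a → b (strictly, ρ < 1/2 for a > b). -/
theorem stmt_8 (a b c δ ρ : ℝ) (hab : a > b) (hb : b > 0)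
    (hc : c > 0) (hc2 : c^2 = a^2 - b^2)
    (hδ : δ = Real.sqrt (a^4 - a^2*b^2 + b^4))
    (hρ : ρ = 2*(δ - b^2)*(a^2 - δ) / c^4) :
    0 < ρ ∧ ρ < 1/2 := by
  have ha : a > 0 := lt_trans hb hab
  have hd0 : δ ≥ 0 := hδ ▸ Real.sqrt_nonneg _
  have hd2 : δ^2 = a^4 - a^2*b^2 + b^4 := by
    rw [hδ, Real.sq_sqrt]
    nlinarith [sq_nonneg (a^2 - b^2), sq_nonneg (a*b)]
  have hab2 : a^2 > b^2 := by nlinarith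
  have h1 : δ > b^2 := by nlinarith [sq_nonneg b]
  have h2 : δ < a^2 := by nlinarith [mul_pos ha ha, mul_pos hb hb]
  have hc4 : c^4 = (a^2 - b^2)^2 := by
    have : c^4 = (c^2)^2 := by ring
    rw [this, hc2]
  have hc4pos : c^4 > 0 := by rw [hc4]; exact pow_pos (by linarith) 2
  have hN : 2*(δ - b^2)*(a^2 - δ) > 0 := by nlinarith
  constructor
  · rw [hρ]; positivity
  · rw [hρ, div_lt_iff₀ hc4pos, hc4]
    have h4 : (a^2 - b^2)^4 > 0 := pow_pos (by linarith) 4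
    have key : 4*δ*(a^2+b^2) < 5*a^4 - 2*a^2*b^2 + 5*b^4 := by
      nlinarith [h4, hd2, hd0, mul_nonneg hd0 (by positivity : (0:ℝ) ≤ a^2 + b^2), sq_nonneg (a^2+b^2)]
    nlinarith [key, hd2]
end

section
/- Let a > b > 0, c² = a² − b², δ = √(a⁴ − a²b² + b⁴), and let ρ = 2(δ − b²)(a² − δ)/c⁴. Then (a/b)² = (ρ² + 2(ρ+1)√(1−2ρ) + 2)/(ρ(ρ+4)), i.e., a/b = √[(ρ² + 2(ρ+1)√(1−2ρ) + 2)/(ρ(ρ+4))]. -/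
/-!
Write `u = a²`, `v = b²` and `s = (2δ - u - v)/(u - v)`. The identity
`(u - v)² = 4(δ - v)(u - δ) + (2δ - u - v)²` gives `ρ = (1 - s²)/2`, and `0 < s < 1`, so
`√(1 - 2ρ) = s`. In terms of `s` the numerator is `((3 - s)(1 + s))²/4` and the denominator
`(1 - s²)(9 - s²)/4`, so the right-hand side collapses to `(3 - s)(1 + s)/((1 - s)(3 + s))`,
which equals `u/v` because `δ² = u² - uv + v²`.
-/

lemma div_eq_of_eq_half_one_sub_sq {s ρ : ℝ} (hs0 : 0 ≤ s) (hs1 : s < 1)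
    (hρ : ρ = (1 - s^2) / 2) :
    (ρ^2 + 2*(ρ + 1) * √(1 - 2*ρ) + 2) / (ρ * (ρ + 4))
      = (3 - s) * (1 + s) / ((1 - s) * (3 + s)) := by
  have hsqrt : √(1 - 2*ρ) = s := by
    rw [hρ, show 1 - 2 * ((1 - s^2) / 2) = s^2 by ring, Real.sqrt_sq hs0]
  have hnum : ρ^2 + 2*(ρ + 1) * s + 2 = ((3 - s) * (1 + s))^2 / 4 := by rw [hρ]; ring
  have hden : ρ * (ρ + 4) = (1 - s) * (1 + s) * (3 - s) * (3 + s) / 4 := by rw [hρ]; ring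
  have h1s : 1 - s ≠ 0 := by linarith
  have h3s : 3 - s ≠ 0 := by linarith
  have h1ps : 1 + s ≠ 0 := by linarith
  have h3ps : 3 + s ≠ 0 := by linarith
  rw [hsqrt, hnum, hden]
  field_simp

lemma two_mul_sub_mul_sub_div_sq_eq {u v : ℝ} (δ : ℝ) (huv : u ≠ v) :
    2*(δ - v)*(u - δ) / (u - v)^2 = (1 - ((2*δ - u - v) / (u - v))^2) / 2 := by
  have : u - v ≠ 0 := sub_ne_zero.mpr huv
  field_simp
  ring

lemma add_lt_two_mul_and_lt {u v δ : ℝ} (hv : 0 < v) (hvu : v < u) (hδ0 : 0 ≤ δ)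
    (hδ : δ^2 = u^2 - u*v + v^2) : u + v < 2*δ ∧ δ < u := by
  constructor
  · nlinarith [sq_nonneg (u - v)]
  · nlinarith

lemma div_eq_of_sq_eq {u v δ : ℝ} (hv : 0 < v) (hvu : v < u) (hδ0 : 0 ≤ δ)
    (hδ : δ^2 = u^2 - u*v + v^2) :
    u / v = (3 - (2*δ - u - v) / (u - v)) * (1 + (2*δ - u - v) / (u - v))
      / ((1 - (2*δ - u - v) / (u - v)) * (3 + (2*δ - u - v) / (u - v))) := by
  obtain ⟨h2δ, hδu⟩ := add_lt_two_mul_and_lt hv hvu hδ0 hδ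
  have huv : u - v ≠ 0 := by linarith
  have h1 : u - v - (2*δ - u - v) ≠ 0 := by linarith
  have h3 : 3*(u - v) + (2*δ - u - v) ≠ 0 := by linarith
  field_simp
  linear_combination (-4*(u - v)) * hδ

theorem stmt_9_general (a b c δ ρ : ℝ) (hab : a > b) (hb : b > 0)
    (hc2 : c^2 = a^2 - b^2)
    (hδ : δ = Real.sqrt (a^4 - a^2*b^2 + b^4))
    (hρ : ρ = 2*(δ - b^2)*(a^2 - δ) / c^4) :
    (a / b)^2 = (ρ^2 + 2*(ρ + 1) * Real.sqrt (1 - 2*ρ) + 2) / (ρ * (ρ + 4)) ∧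
    a / b = Real.sqrt ((ρ^2 + 2*(ρ + 1) * Real.sqrt (1 - 2*ρ) + 2) / (ρ * (ρ + 4))) := by
  have ha : 0 < a := hb.trans hab
  have hb2 : 0 < b^2 := by positivity
  have hab2 : b^2 < a^2 := by gcongr
  have hδ0 : 0 ≤ δ := hδ ▸ Real.sqrt_nonneg _
  have hδ2 : δ^2 = (a^2)^2 - a^2*b^2 + (b^2)^2 := by
    rw [hδ, Real.sq_sqrt (by nlinarith [sq_nonneg (a^2 - b^2)])]
    ring
  obtain ⟨h2δ, hδa⟩ := add_lt_two_mul_and_lt hb2 hab2 hδ0 hδ2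
  have hρs : ρ = (1 - ((2*δ - a^2 - b^2) / (a^2 - b^2))^2) / 2 := by
    rw [hρ, show c^4 = (a^2 - b^2)^2 by rw [← hc2]; ring,
      two_mul_sub_mul_sub_div_sq_eq δ hab2.ne']
  have hsq : (a / b)^2 = (ρ^2 + 2*(ρ + 1) * Real.sqrt (1 - 2*ρ) + 2) / (ρ * (ρ + 4)) := by
    have hs1 : (2*δ - a^2 - b^2) / (a^2 - b^2) < 1 := by
      rw [div_lt_one (by linarith)]; linarith
    rw [div_eq_of_eq_half_one_sub_sq (div_nonneg (by linarith) (by linarith)) hs1 hρs,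
      div_pow, div_eq_of_sq_eq hb2 hab2 hδ0 hδ2]
  exact ⟨hsq, by rw [← hsq, Real.sqrt_sq (by positivity)]⟩

theorem stmt_9 (a b c δ ρ : ℝ) (hab : a > b) (hb : b > 0)
    (hc : c > 0) (hc2 : c^2 = a^2 - b^2)
    (hδ : δ = Real.sqrt (a^4 - a^2*b^2 + b^4))
    (hρ : ρ = 2*(δ - b^2)*(a^2 - δ) / c^4) :
    (a / b)^2 = (ρ^2 + 2*(ρ + 1) * Real.sqrt (1 - 2*ρ) + 2) / (ρ * (ρ + 4)) ∧
    a / b = Real.sqrt ((ρ^2 + 2*(ρ + 1) * Real.sqrt (1 - 2*ρ) + 2) / (ρ * (ρ + 4))) :=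
  stmt_9_general a b c δ ρ hab hb hc2 hδ hρ
end

section
/- Let a > b > 0 and P₁ = (x₁, y₁) on the ellipse x²/a² + y²/b² = 1 with x₁y₁ ≠ 0; let c² = a²−b². Define P₂ = (p₂ₓ/q₂, p₂ᵧ/q₂) with p₂ₓ = b⁴c²x₁³ − 2a⁴b²x₁²y₁ + a⁴c²x₁y₁² − 2a⁶y₁³, p₂ᵧ = 2b⁶x₁³ − b⁴c²x₁²y₁ + 2a²b⁴x₁y₁² − a⁴c²y₁³, q₂ = b⁴(a²+b²)x₁² − 2a²b²c²x₁y₁ + a⁴(a²+b²)y₁². Then P₂ lies on the ellipse x²/a² + y²/b² = 1. -/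
/-!
With `c² = a² - b²`, the numerators and denominator of `P₂` satisfy the polynomial identity
`b² p₂ₓ² + a² p₂ᵧ² = (b² x₁² + a² y₁²) q₂²`, so `P₂` lies on the ellipse whenever `P₁` does,
provided `q₂ ≠ 0`. The denominator is a sum of squares,
`q₂ = c² (b² x₁ - a² y₁)² + 2 b² (b⁴ x₁² + a⁴ y₁²)`, which is positive off the origin.
-/

theorem div_sq_div_add_div_sq_div_eq_one {a b X Y q : ℝ} (ha : a ≠ 0) (hb : b ≠ 0) (hq : q ≠ 0)
    (h : b^2 * X^2 + a^2 * Y^2 = a^2 * b^2 * q^2) :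
    (X / q)^2 / a^2 + (Y / q)^2 / b^2 = 1 := by
  field_simp
  linear_combination h

section SecondVertex

variable (a b c x y : ℝ)

def secondVertexNumX : ℝ :=
  b^4*c^2*x^3 - 2*a^4*b^2*x^2*y + a^4*c^2*x*y^2 - 2*a^6*y^3

def secondVertexNumY : ℝ :=
  2*b^6*x^3 - b^4*c^2*x^2*y + 2*a^2*b^4*x*y^2 - a^4*c^2*y^3

def secondVertexDen : ℝ :=
  b^4*(a^2 + b^2)*x^2 - 2*a^2*b^2*c^2*x*y + a^4*(a^2 + b^2)*y^2

variable {a b c x y}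

theorem secondVertex_sum_sq (hc : c^2 = a^2 - b^2) :
    b^2 * secondVertexNumX a b c x y ^ 2 + a^2 * secondVertexNumY a b c x y ^ 2
      = (b^2*x^2 + a^2*y^2) * secondVertexDen a b c x y ^ 2 := by
  simp only [secondVertexNumX, secondVertexNumY, secondVertexDen, hc]
  ring

theorem secondVertexDen_eq (hc : c^2 = a^2 - b^2) :
    secondVertexDen a b c x y = c^2*(b^2*x - a^2*y)^2 + 2*b^2*(b^4*x^2 + a^4*y^2) := by
  rw [secondVertexDen]
  linear_combination (-(b^4*x^2) - a^4*y^2) * hc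

theorem secondVertexDen_pos (ha : a ≠ 0) (hb : b ≠ 0) (hc : c^2 = a^2 - b^2)
    (hE : b^2*x^2 + a^2*y^2 = a^2*b^2) : 0 < secondVertexDen a b c x y := by
  have hxy : x ≠ 0 ∨ y ≠ 0 := by
    by_contra! h
    obtain ⟨rfl, rfl⟩ := h
    have : a^2 * b^2 ≠ 0 := by positivity
    exact this (by linear_combination -hE)
  rw [secondVertexDen_eq hc]
  rcases hxy with hx | hy <;> positivity

end SecondVertex

theorem stmt_16_general (a b c x₁ y₁ : ℝ) (hb : b > 0)
    (hc2 : c^2 = a^2 - b^2)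
    (hell : x₁^2 / a^2 + y₁^2 / b^2 = 1)
    (p₂ₓ p₂ᵧ q₂ : ℝ)
    (hpx : p₂ₓ = b^4*c^2*x₁^3 - 2*a^4*b^2*x₁^2*y₁ + a^4*c^2*x₁*y₁^2 - 2*a^6*y₁^3)
    (hpy : p₂ᵧ = 2*b^6*x₁^3 - b^4*c^2*x₁^2*y₁ + 2*a^2*b^4*x₁*y₁^2 - a^4*c^2*y₁^3)
    (hq : q₂ = b^4*(a^2 + b^2)*x₁^2 - 2*a^2*b^2*c^2*x₁*y₁ + a^4*(a^2 + b^2)*y₁^2) :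
    (p₂ₓ / q₂)^2 / a^2 + (p₂ᵧ / q₂)^2 / b^2 = 1 := by
  have hb0 : b ≠ 0 := hb.ne'
  have ha0 : a ≠ 0 := by
    rintro rfl
    nlinarith [sq_nonneg c, mul_pos hb hb]
  have hE : b^2*x₁^2 + a^2*y₁^2 = a^2*b^2 := by
    field_simp at hell
    linear_combination hell
  have hq0 : q₂ ≠ 0 := hq ▸ (secondVertexDen_pos ha0 hb0 hc2 hE).ne'
  refine div_sq_div_add_div_sq_div_eq_one ha0 hb0 hq0 ?_
  rw [hpx, hpy, hq, ← hE]
  exact secondVertex_sum_sq hc2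

theorem stmt_16 (a b c x₁ y₁ : ℝ) (hab : a > b) (hb : b > 0)
    (hc2 : c^2 = a^2 - b^2) (hxy : x₁ * y₁ ≠ 0)
    (hell : x₁^2 / a^2 + y₁^2 / b^2 = 1)
    (p₂ₓ p₂ᵧ q₂ : ℝ)
    (hpx : p₂ₓ = b^4*c^2*x₁^3 - 2*a^4*b^2*x₁^2*y₁ + a^4*c^2*x₁*y₁^2 - 2*a^6*y₁^3)
    (hpy : p₂ᵧ = 2*b^6*x₁^3 - b^4*c^2*x₁^2*y₁ + 2*a^2*b^4*x₁*y₁^2 - a^4*c^2*y₁^3)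
    (hq : q₂ = b^4*(a^2 + b^2)*x₁^2 - 2*a^2*b^2*c^2*x₁*y₁ + a^4*(a^2 + b^2)*y₁^2) :
    (p₂ₓ / q₂)^2 / a^2 + (p₂ᵧ / q₂)^2 / b^2 = 1 :=
  stmt_16_general a b c x₁ y₁ hb hc2 hell p₂ₓ p₂ᵧ q₂ hpx hpy hq
end

section
/- Let a > b > 0, c² = a² − b², δ = √(a⁴ − a²b² + b⁴), and define k = (2δ − a² − b²)/c². Then 0 < k < 1. -/
theorem stmt_18 (a b c δ k : ℝ) (hab : a > b) (hb : b > 0)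
    (hc : c > 0) (hc2 : c^2 = a^2 - b^2)
    (hδ : δ = Real.sqrt (a^4 - a^2*b^2 + b^4))
    (hk : k = (2*δ - a^2 - b^2) / c^2) :
    0 < k ∧ k < 1 := by
  have ha : a > 0 := hb.trans hab
  have hpos : (0:ℝ) ≤ a^4 - a^2*b^2 + b^4 := by nlinarith [sq_nonneg (a^2 - b^2), sq_nonneg (a*b)]
  have hδ2 : δ^2 = a^4 - a^2*b^2 + b^4 := by rw [hδ, Real.sq_sqrt hpos]
  have hδ0 : 0 ≤ δ := hδ ▸ Real.sqrt_nonneg _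
  have hc2pos : (0:ℝ) < c^2 := by positivity
  have h1 : 2*δ - a^2 - b^2 > 0 := by nlinarith [sq_nonneg (a^2 - b^2), sq_nonneg (2*δ - a^2 - b^2)]
  have hba : b^2 < a^2 := by nlinarith
  have hδa : δ < a^2 := by
    nlinarith [mul_pos (mul_pos hb hb) (sub_pos.mpr hba), sq_nonneg (δ + a^2), mul_nonneg hδ0 (sq_nonneg a)]
  have h2 : 2*δ - a^2 - b^2 < c^2 := by nlinarith
  constructor
  · rw [hk]; positivity
  · rw [hk, div_lt_one hc2pos]; exact h2
end
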